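/- arXiv:2509.14467 — 3 statements merged into one kernel-verified Lean document; each statement's English description precedes it below -/
import Mathlib

section
/- The q-s Catalan numbers satisfy the recurrence G_N(q,s) = ∑_{k=0}^{N-1} s · q^{N-k-1} · G_k(q,s) · G_{N-k-1}(q,1) for all N ≥ 1, with G_0(q,s) = 1. -/
open Finset

/-- Height of a ±1 path after `k` steps (`true` = up-step, `false` = down-step). -/
def dheight (w : List Bool) (k : ℕ) : ℤ :=
  ((w.take k).map (fun b => if b then (1 : ℤ) else -1)).sum

/-- A Dyck path: heights stay nonnegative and the path ends at height 0. -/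
def IsDyck (w : List Bool) : Prop :=
  (∀ k ∈ Finset.range (w.length + 1), 0 ≤ dheight w k) ∧ dheight w w.length = 0

/-- The area (number of full lattice squares) under a Dyck path:
`a(w) = (∑_{k=1}^{2N} h_k - N) / 2`. -/
def darea (w : List Bool) : ℤ :=
  ((∑ k ∈ Finset.range w.length, dheight w (k + 1)) - (w.length : ℤ) / 2) / 2

/-- Number of returns of the path to height zero (endpoint counted, start not). -/
def dreturns (w : List Bool) : ℕ :=
  ((Finset.Icc 1 w.length).filter (fun k => dheight w k = 0)).card

-- The q-s Catalan number `G_N(q,s) = ∑_{w ∈ D_N} q^{a(w)} s^{m(w)}`.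
open scoped Classical in
noncomputable def Gqs (N : ℕ) (q s : ℝ) : ℝ :=
  ∑ f : Fin (2 * N) → Bool,
    if IsDyck (List.ofFn f)
    then q ^ (darea (List.ofFn f)).toNat * s ^ dreturns (List.ofFn f)
    else 0

/-!
Every nonempty Dyck path factors uniquely by its first return as `U u D v` with `u`, `v` Dyck
paths. The prefix `U u D` contributes exactly one return, and lifting `u` by one step adds
`|u| / 2` full squares to its area, so
`q^a s^m (U u D v) = s q^(|u|/2) · q^a(u) · q^a(v) s^m(v)`. Summing over the half-length `k` of
`v` gives the recurrence.
-/

@[simp] lemma dheight_zero (w : List Bool) : dheight w 0 = 0 := rfl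

lemma dheight_cons_succ (b : Bool) (w : List Bool) (k : ℕ) :
    dheight (b :: w) (k + 1) = (if b then 1 else -1) + dheight w k := by
  simp [dheight]

lemma dheight_append (a b : List Bool) (k : ℕ) :
    dheight (a ++ b) k = dheight a k + dheight b (k - a.length) := by
  simp [dheight, List.take_append]

lemma dheight_add (w : List Bool) (m n : ℕ) :
    dheight w (m + n) = dheight w m + dheight (w.drop m) n := by
  simp [dheight, List.take_add]

lemma dheight_take (w : List Bool) (m k : ℕ) : dheight (w.take m) k = dheight w (min k m) := by
  simp [dheight, List.take_take]

lemma dheight_of_length_le {w : List Bool} {k : ℕ} (h : w.length ≤ k) :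
    dheight w k = dheight w w.length := by
  simp [dheight, List.take_of_length_le h]

lemma dheight_succ {w : List Bool} {k : ℕ} (h : k < w.length) :
    dheight w (k + 1) = dheight w k + if w[k] then 1 else -1 := by
  rw [dheight_add, ← List.getElem_cons_drop h, ← zero_add 1, dheight_cons_succ]
  simp [dheight]

lemma dheight_wrap_append_of_le (u v : List Bool) {k : ℕ} (hk : k ≤ u.length) :
    dheight (true :: u ++ false :: v) (k + 1) = 1 + dheight u k := by
  rw [List.cons_append, dheight_cons_succ, dheight_append, Nat.sub_eq_zero_of_le hk]
  simp [dheight]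

lemma dheight_wrap_append_add {u : List Bool} (v : List Bool) (hu : dheight u u.length = 0)
    (i : ℕ) : dheight (true :: u ++ false :: v) (u.length + 2 + i) = dheight v i := by
  rw [show u.length + 2 + i = (u.length + 1 + i) + 1 by omega, List.cons_append,
    dheight_cons_succ, dheight_append, dheight_of_length_le (by omega), hu,
    show u.length + 1 + i - u.length = i + 1 by omega, dheight_cons_succ]
  simp

lemma IsDyck.wrap_append {u v : List Bool} (hu : IsDyck u) (hv : IsDyck v) :
    IsDyck (true :: u ++ false :: v) := by
  have hlen : (true :: u ++ false :: v).length = u.length + 2 + v.length := by simp; omega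
  refine ⟨fun k hk => ?_, by rw [hlen, dheight_wrap_append_add v hu.2, hv.2]⟩
  rw [hlen, mem_range] at hk
  rcases k with _ | k
  · rfl
  rcases le_or_gt k u.length with hku | hku
  · rw [dheight_wrap_append_of_le u v hku]
    linarith [hu.1 k (by simpa using Nat.lt_succ_of_le hku)]
  · obtain ⟨i, hi⟩ : ∃ i, k + 1 = u.length + 2 + i := ⟨k - u.length - 1, by omega⟩
    rw [hi, dheight_wrap_append_add v hu.2]
    exact hv.1 i (by simp; omega)

/-- A path that goes below zero splits at its first step from height `0` to `-1`. -/
lemma exists_isDyck_append_false_cons {x : List Bool} (hneg : ∃ k, dheight x k < 0) :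
    ∃ u v, IsDyck u ∧ x = u ++ false :: v := by
  classical
  obtain ⟨r, hr, hmin⟩ : ∃ r, dheight x r < 0 ∧ ∀ j < r, 0 ≤ dheight x j :=
    ⟨Nat.find hneg, Nat.find_spec hneg, fun j hj => not_lt.mp (Nat.find_min hneg hj)⟩
  obtain ⟨p, rfl⟩ : ∃ p, r = p + 1 :=
    Nat.exists_eq_add_one.mpr (Nat.pos_of_ne_zero fun h => by simp [h] at hr)
  have hp_len : p < x.length := by
    by_contra! h
    exact absurd (dheight_of_length_le (by omega : x.length ≤ p + 1) ▸ hr)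
      (not_lt.mpr (hmin x.length (by omega)))
  have hstep := dheight_succ hp_len
  have hhp := hmin p (by omega)
  have hxp : x[p] = false := by
    by_contra h
    simp only [Bool.not_eq_false] at h
    simp [h] at hstep
    omega
  have hu_len : (x.take p).length = p := List.length_take_of_le hp_len.le
  refine ⟨x.take p, x.drop (p + 1), ⟨fun k hk => ?_, ?_⟩, ?_⟩
  · rw [dheight_take]
    exact hmin _ (by omega)
  · rw [hu_len, dheight_take, min_self]
    simp [hxp] at hstep
    omega
  · rw [← hxp, List.getElem_cons_drop, List.take_append_drop]

lemma IsDyck.exists_eq_wrap_append {w : List Bool} (hw : IsDyck w) (hne : w ≠ []) :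
    ∃ u v, IsDyck u ∧ IsDyck v ∧ w = true :: u ++ false :: v := by
  obtain ⟨b, x, rfl⟩ := List.exists_cons_of_ne_nil hne
  have hb : b = true := by
    have h1 := hw.1 1 (by simp)
    rw [dheight_cons_succ] at h1
    cases b <;> simp_all [dheight]
  subst hb
  have hx_neg : dheight x x.length < 0 := by
    have h := hw.2
    rw [List.length_cons, dheight_cons_succ] at h
    simp at h
    omega
  obtain ⟨u, v, hu, rfl⟩ := exists_isDyck_append_false_cons ⟨_, hx_neg⟩
  have hlen : (true :: u ++ false :: v).length = u.length + 2 + v.length := by simp; omega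
  refine ⟨u, v, hu, ⟨fun i hi => ?_, ?_⟩, rfl⟩
  · rw [← dheight_wrap_append_add v hu.2]
    exact hw.1 _ (by simp at hi ⊢; omega)
  · rw [← dheight_wrap_append_add v hu.2, ← hlen]
    exact hw.2

lemma IsDyck.length_le_of_append_false_cons_eq {u v u' v' : List Bool} (hu : IsDyck u)
    (hu' : IsDyck u') (h : u ++ false :: v = u' ++ false :: v') : u.length ≤ u'.length := by
  by_contra! hlt
  have h' := congrArg (fun w => dheight w (u'.length + 1)) h
  simp only [dheight_append] at h'
  rw [dheight_of_length_le (by omega : u'.length ≤ u'.length + 1), hu'.2,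
    Nat.sub_eq_zero_of_le (by omega : u'.length + 1 ≤ u.length),
    show u'.length + 1 - u'.length = 0 + 1 by omega, dheight_cons_succ] at h'
  have := hu.1 (u'.length + 1) (by simp; omega)
  simp at h'
  omega

lemma IsDyck.eq_of_append_false_cons_eq {u v u' v' : List Bool} (hu : IsDyck u)
    (hu' : IsDyck u') (h : u ++ false :: v = u' ++ false :: v') : u = u' ∧ v = v' := by
  have hlen := (hu.length_le_of_append_false_cons_eq hu' h).antisymm
    (hu'.length_le_of_append_false_cons_eq hu h.symm)
  obtain ⟨rfl, hv⟩ := List.append_inj h hlen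
  exact ⟨rfl, List.cons_injective hv⟩

@[elab_as_elim]
theorem IsDyck.induction {P : List Bool → Prop} (nil : P [])
    (wrap : ∀ u v, IsDyck u → IsDyck v → P u → P v → P (true :: u ++ false :: v))
    {w : List Bool} (hw : IsDyck w) : P w := by
  induction hlen : w.length using Nat.strong_induction_on generalizing w with
  | _ n ih =>
    rcases eq_or_ne w [] with rfl | hne
    · exact nil
    obtain ⟨u, v, hu, hv, rfl⟩ := hw.exists_eq_wrap_append hne
    simp only [List.length_cons, List.length_append] at hlen
    exact wrap u v hu hv (ih _ (by omega) hu rfl) (ih _ (by omega) hv rfl)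

lemma IsDyck.even_length {w : List Bool} (hw : IsDyck w) : Even w.length := by
  refine IsDyck.induction (by simp) (fun u v _ _ ⟨a, ha⟩ ⟨b, hb⟩ => ⟨a + b + 1, ?_⟩) hw
  simp; omega

def heightSum (w : List Bool) : ℤ := ∑ k ∈ range w.length, dheight w (k + 1)

lemma sum_range_dheight_wrap_append {M : Type*} [AddCommMonoid M] (g : ℤ → M) {u : List Bool}
    (v : List Bool) (hu : dheight u u.length = 0) :
    ∑ k ∈ range (true :: u ++ false :: v).length, g (dheight (true :: u ++ false :: v) (k + 1)) =
      ∑ k ∈ range (u.length + 1), g (1 + dheight u k) +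
        ∑ k ∈ range (v.length + 1), g (dheight v k) := by
  rw [show (true :: u ++ false :: v).length = (u.length + 1) + (v.length + 1) by simp; omega,
    sum_range_add]
  congr 1
  · refine sum_congr rfl fun k hk => ?_
    rw [dheight_wrap_append_of_le u v (by simp at hk; omega)]
  · refine sum_congr rfl fun k _ => ?_
    rw [show u.length + 1 + k + 1 = u.length + 2 + k by omega, dheight_wrap_append_add v hu]

lemma heightSum_wrap_append {u : List Bool} (v : List Bool) (hu : dheight u u.length = 0) :
    heightSum (true :: u ++ false :: v) = heightSum u + heightSum v + u.length + 1 := by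
  refine (sum_range_dheight_wrap_append id v hu).trans ?_
  rw [sum_range_succ', sum_range_succ']
  simp [sum_add_distrib, heightSum]
  ring

lemma darea_eq_of_heightSum_eq {w : List Bool} {n : ℤ}
    (h : heightSum w = 2 * n + (w.length : ℤ) / 2) : darea w = n := by
  change (heightSum w - _) / 2 = n
  omega

lemma IsDyck.exists_heightSum_eq {w : List Bool} (hw : IsDyck w) :
    ∃ n : ℕ, heightSum w = 2 * n + (w.length : ℤ) / 2 := by
  refine IsDyck.induction ⟨0, by simp [heightSum]⟩ (fun u v hu _ ⟨a, ha⟩ ⟨b, hb⟩ => ?_) hw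
  obtain ⟨c, hc⟩ := hu.even_length
  refine ⟨a + b + c, ?_⟩
  rw [heightSum_wrap_append v hu.2, ha, hb]
  simp
  omega

lemma IsDyck.darea_wrap_append {u v : List Bool} (hu : IsDyck u) (hv : IsDyck v) :
    (darea (true :: u ++ false :: v)).toNat =
      (darea u).toNat + (darea v).toNat + u.length / 2 := by
  obtain ⟨a, ha⟩ := hu.exists_heightSum_eq
  obtain ⟨b, hb⟩ := hv.exists_heightSum_eq
  obtain ⟨c, hc⟩ := hu.even_length
  have hab : heightSum (true :: u ++ false :: v) = 2 * (a + b + c : ℕ) +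
      ((true :: u ++ false :: v).length : ℤ) / 2 := by
    rw [heightSum_wrap_append v hu.2, ha, hb]
    simp
    omega
  rw [darea_eq_of_heightSum_eq ha, darea_eq_of_heightSum_eq hb, darea_eq_of_heightSum_eq hab]
  simp only [Int.toNat_natCast]
  omega

lemma dreturns_eq_sum (w : List Bool) :
    dreturns w = ∑ k ∈ range w.length, if dheight w (k + 1) = 0 then 1 else 0 := by
  rw [dreturns, card_filter, ← Ico_add_one_right_eq_Icc, sum_Ico_eq_sum_range]
  simp [add_comm]

lemma IsDyck.dreturns_wrap_append {u : List Bool} (hu : IsDyck u) (v : List Bool) :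
    dreturns (true :: u ++ false :: v) = dreturns v + 1 := by
  rw [dreturns_eq_sum]
  refine (sum_range_dheight_wrap_append (fun h => if h = 0 then 1 else 0) v hu.2).trans ?_
  rw [sum_eq_zero fun k hk => ?_, zero_add, sum_range_succ', dreturns_eq_sum]
  · simp
  · have := hu.1 k hk
    rw [if_neg (by omega)]

noncomputable def dweight (q s : ℝ) (w : List Bool) : ℝ := q ^ (darea w).toNat * s ^ dreturns w

lemma IsDyck.dweight_wrap_append {u v : List Bool} (hu : IsDyck u) (hv : IsDyck v) (q s : ℝ) :
    dweight q s (true :: u ++ false :: v) =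
      s * q ^ (u.length / 2) * dweight q 1 u * dweight q s v := by
  simp only [dweight, hu.darea_wrap_append hv, hu.dreturns_wrap_append, pow_add, one_pow]
  ring

open scoped Classical in
noncomputable def dyckPaths (n : ℕ) : Finset (List Bool) :=
  (univ.image (List.ofFn : (Fin n → Bool) → List Bool)).filter IsDyck

lemma mem_dyckPaths {n : ℕ} {w : List Bool} : w ∈ dyckPaths n ↔ w.length = n ∧ IsDyck w := by
  simp only [dyckPaths, mem_filter, mem_image, mem_univ, true_and]
  constructor
  · rintro ⟨⟨f, rfl⟩, hw⟩
    exact ⟨List.length_ofFn, hw⟩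
  · rintro ⟨rfl, hw⟩
    exact ⟨⟨w.get, List.ofFn_get w⟩, hw⟩

lemma Gqs_eq_sum_dyckPaths (N : ℕ) (q s : ℝ) :
    Gqs N q s = ∑ w ∈ dyckPaths (2 * N), dweight q s w := by
  classical
  rw [Gqs, dyckPaths, sum_filter, sum_image fun f _ g _ h => List.ofFn_injective h]
  rfl

lemma sum_dyckPaths_succ {M : Type*} [AddCommMonoid M] (f : List Bool → M) (N : ℕ) :
    ∑ w ∈ dyckPaths (2 * (N + 1)), f w = ∑ k ∈ range (N + 1), ∑ v ∈ dyckPaths (2 * k),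
      ∑ u ∈ dyckPaths (2 * (N - k)), f (true :: u ++ false :: v) := by
  trans ∑ x ∈ (range (N + 1)).sigma fun k => dyckPaths (2 * k) ×ˢ dyckPaths (2 * (N - k)),
    f (true :: x.2.2 ++ false :: x.2.1)
  swap
  · simp only [sum_sigma, sum_product]
  symm
  refine sum_bij (fun x _ => true :: x.2.2 ++ false :: x.2.1) ?_ ?_ ?_ fun _ _ => rfl
  · rintro ⟨k, v, u⟩ hx
    simp only [mem_sigma, mem_product, mem_range, mem_dyckPaths] at hx ⊢
    exact ⟨by simp; omega, hx.2.2.2.wrap_append hx.2.1.2⟩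
  · rintro ⟨k, v, u⟩ hx ⟨k', v', u'⟩ hx' h
    simp only [mem_sigma, mem_product, mem_range, mem_dyckPaths] at hx hx'
    obtain ⟨rfl, rfl⟩ := hx.2.2.2.eq_of_append_false_cons_eq hx'.2.2.2 (List.cons_injective h)
    obtain rfl : k = k' := by omega
    rfl
  · intro w hw
    rw [mem_dyckPaths] at hw
    obtain ⟨u, v, hu, hv, rfl⟩ := hw.2.exists_eq_wrap_append (by rintro rfl; simp at hw)
    obtain ⟨a, ha⟩ := hu.even_length
    obtain ⟨b, hb⟩ := hv.even_length
    have hlen : a + b = N := by simp at hw; omega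
    refine ⟨⟨b, v, u⟩, ?_, rfl⟩
    simp only [mem_sigma, mem_product, mem_range, mem_dyckPaths]
    exact ⟨by omega, ⟨by omega, hv⟩, ⟨by omega, hu⟩⟩

/-- The q-s Catalan numbers satisfy `G_0(q,s) = 1` and, for `N ≥ 1`,
`G_N(q,s) = ∑_{k=0}^{N-1} s q^{N-k-1} G_k(q,s) G_{N-k-1}(q,1)`. -/
theorem Gqs_recurrence (q s : ℝ) :
    Gqs 0 q s = 1 ∧
      ∀ N : ℕ, 1 ≤ N →
        Gqs N q s =
          ∑ k ∈ Finset.range N,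
            s * q ^ (N - k - 1) * Gqs k q s * Gqs (N - k - 1) q 1 := by
  refine ⟨by simp [Gqs, IsDyck, darea, dreturns], fun N hN => ?_⟩
  obtain ⟨M, rfl⟩ := Nat.exists_eq_add_one.mpr hN
  rw [Gqs_eq_sum_dyckPaths, sum_dyckPaths_succ]
  refine sum_congr rfl fun k _ => ?_
  rw [show M + 1 - k - 1 = M - k by omega, Gqs_eq_sum_dyckPaths, Gqs_eq_sum_dyckPaths,
    mul_assoc, sum_mul_sum, mul_sum]
  refine sum_congr rfl fun v hv => ?_
  rw [mul_sum]
  refine sum_congr rfl fun u hu => ?_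
  rw [mem_dyckPaths] at hu hv
  rw [hu.2.dweight_wrap_append hv.2, hu.1, Nat.mul_div_cancel_left _ two_pos]
  ring
end

section
/- At q = 1 the single-parity partition function equals Z_N(1) = (1/2)·binomial(2N, N), i.e. ∑_{w ∈ D_N} N/m(w) = (1/2)·binomial(2N, N) for N ≥ 1. -/
/-!
By the cycle lemma, rotating a balanced cyclic word of length `n` by `j` gives a Dyck path
exactly when the cyclic height has a global minimum at `j`, and the path then returns to the
axis once for each of the `m` minima in a period. Hence the `n` rotations of a balanced word
contribute `m · (1 / m) = 1` to `∑_j ∑_f [rot_j f ∈ D] / m(rot_j f)`, which therefore counts the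
`C(2N, N)` balanced words; since each rotation permutes the words, the same double sum is
`2N · ∑_{w ∈ D_N} 1 / m(w)`.
-/

open Finset

namespace CyclicWord

open scoped Classical
open Fin.NatCast

section

variable {n : ℕ} [NeZero n]

def step (b : Bool) : ℤ := if b then 1 else -1

/-- Indices are cast into `Fin n`, so the word is read cyclically and `height f k` makes sense for
every `k`. -/
def height (f : Fin n → Bool) (k : ℕ) : ℤ := ∑ i ∈ range k, step (f i)

def rotate (j : ℕ) (f : Fin n → Bool) : Fin n → Bool := fun i => f (i + j)

def IsMinHeight (f : Fin n → Bool) (j : ℕ) : Prop := ∀ k, height f j ≤ height f k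

lemma dheight_ofFn (f : Fin n → Bool) {k : ℕ} (hk : k ≤ n) :
    dheight (List.ofFn f) k = height f k := by
  induction k with
  | zero => simp [dheight, height]
  | succ k ih =>
    have hkn : k < n := hk
    have hcast : ((k : ℕ) : Fin n) = ⟨k, hkn⟩ := Fin.ext (Fin.val_cast_of_lt hkn)
    rw [dheight, List.take_add_one, List.map_append, List.sum_append, ← dheight, ih hkn.le,
      height, height, sum_range_succ]
    simp [hkn, step, hcast]

lemma isDyck_ofFn_iff (f : Fin n → Bool) :
    IsDyck (List.ofFn f) ↔ (∀ k ≤ n, 0 ≤ height f k) ∧ height f n = 0 := by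
  simp only [IsDyck, List.length_ofFn, mem_range, Nat.lt_succ_iff]
  refine and_congr (forall₂_congr fun k hk => ?_) ?_
  · rw [dheight_ofFn f hk]
  · rw [dheight_ofFn f le_rfl]

lemma dreturns_ofFn (f : Fin n → Bool) :
    dreturns (List.ofFn f) = #{k ∈ Icc 1 n | height f k = 0} := by
  rw [dreturns, List.length_ofFn]
  exact congrArg card (filter_congr fun k hk => by rw [dheight_ofFn f (mem_Icc.mp hk).2])

lemma height_length (f : Fin n → Bool) : height f n = ∑ i : Fin n, step (f i) := by
  rw [height, ← Fin.sum_univ_eq_sum_range]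
  simp only [Fin.cast_val_eq_self]

lemma height_rotate (j : ℕ) (f : Fin n → Bool) (k : ℕ) :
    height (rotate j f) k = height f (j + k) - height f j := by
  simp only [height, sum_range_add, rotate]
  rw [add_sub_cancel_left]
  exact sum_congr rfl fun i _ => by rw [Nat.cast_add, add_comm]

lemma height_rotate_length (j : ℕ) (f : Fin n → Bool) : height (rotate j f) n = height f n := by
  simp only [height_length, rotate]
  exact Equiv.sum_comp (Equiv.addRight (j : Fin n)) (fun i => step (f i))

lemma periodic_height {f : Fin n → Bool} (hf : height f n = 0) :
    Function.Periodic (height f) n := fun j => by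
  linarith [height_rotate j f n, height_rotate_length j f]

lemma isDyck_rotate_iff (j : ℕ) (f : Fin n → Bool) :
    IsDyck (List.ofFn (rotate j f)) ↔ height f n = 0 ∧ IsMinHeight f j := by
  rw [isDyck_ofFn_iff, height_rotate_length]
  simp only [height_rotate, sub_nonneg]
  constructor
  · rintro ⟨hmin, hf⟩
    refine ⟨hf, fun k => ?_⟩
    have hper := periodic_height hf
    have hafter : ∀ m, height f j ≤ height f (j + m) := fun m => by
      have := hper.nat_mul (m / n) (j + m % n)
      rw [Nat.cast_id, add_assoc, Nat.mod_add_div'] at this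
      exact this ▸ hmin _ (Nat.mod_lt _ (NeZero.pos n)).le
    have hjn : j ≤ k + j * n := le_add_left (Nat.le_mul_of_pos_right j (NeZero.pos n))
    rw [← hper.nat_mul j k, Nat.cast_id, ← Nat.add_sub_cancel' hjn]
    exact hafter _
  · rintro ⟨hf, hj⟩
    exact ⟨fun k _ => hj (j + k), hf⟩

lemma card_filter_Icc_add_left (p : ℕ → Prop) [DecidablePred p] (j n : ℕ) :
    #{k ∈ Icc 1 n | p (j + k)} = #{i ∈ Ico (j + 1) (j + 1 + n) | p i} := by
  rw [← Nat.add_right_comm, Ico_add_one_right_eq_Icc, ← map_add_left_Icc, filter_map, card_map]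
  rfl

lemma dreturns_rotate {j : ℕ} {f : Fin n → Bool} (hf : height f n = 0) (hj : IsMinHeight f j) :
    dreturns (List.ofFn (rotate j f)) = #{i ∈ range n | IsMinHeight f i} := by
  have hmin_iff (i : ℕ) : height f i = height f j ↔ IsMinHeight f i :=
    ⟨fun h k => h ▸ hj k, fun h => le_antisymm (h j) (hj i)⟩
  simp only [dreturns_ofFn, height_rotate, sub_eq_zero, hmin_iff]
  rw [card_filter_Icc_add_left (IsMinHeight f), Nat.filter_Ico_card_eq_of_periodic,
    Nat.count_eq_card_filter_range]
  exact (periodic_height hf).comp fun h => ∀ k, h ≤ height f k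

lemma card_isMinHeight_pos {f : Fin n → Bool} (hf : height f n = 0) :
    0 < #{i ∈ range n | IsMinHeight f i} := by
  obtain ⟨i, hi, hmin⟩ :=
    exists_min_image (range n) (height f) (nonempty_range_iff.mpr (NeZero.ne n))
  refine card_pos.mpr ⟨i, mem_filter.mpr ⟨hi, fun k => ?_⟩⟩
  rw [← (periodic_height hf).map_mod_nat k]
  exact hmin _ (mem_range.mpr (Nat.mod_lt _ (NeZero.pos n)))

noncomputable def returnWeight (f : Fin n → Bool) : ℝ :=
  if IsDyck (List.ofFn f) then (dreturns (List.ofFn f) : ℝ)⁻¹ else 0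

lemma sum_returnWeight_rotate (f : Fin n → Bool) :
    ∑ j ∈ range n, returnWeight (rotate j f) = if height f n = 0 then 1 else 0 := by
  split_ifs with hf
  · have hterm (j : ℕ) : returnWeight (rotate j f)
        = if IsMinHeight f j then (#{i ∈ range n | IsMinHeight f i} : ℝ)⁻¹ else 0 := by
      unfold returnWeight
      split_ifs with hdyck hj hj
      · rw [dreturns_rotate hf hj]
      · exact absurd ((isDyck_rotate_iff j f).mp hdyck).2 hj
      · exact absurd ((isDyck_rotate_iff j f).mpr ⟨hf, hj⟩) hdyck
      · rfl
    rw [sum_congr rfl fun j _ => hterm j, sum_ite, sum_const_zero, add_zero, sum_const,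
      nsmul_eq_mul]
    exact mul_inv_cancel₀ (Nat.cast_ne_zero.mpr (card_isMinHeight_pos hf).ne')
  · refine sum_eq_zero fun j _ => ?_
    rw [returnWeight, if_neg fun hdyck => hf ((isDyck_rotate_iff j f).mp hdyck).1]

lemma sum_comp_rotate {M : Type*} [AddCommMonoid M] (j : ℕ) (g : (Fin n → Bool) → M) :
    ∑ f, g (rotate j f) = ∑ f, g f :=
  Equiv.sum_comp ((Equiv.addRight (j : Fin n)).symm.arrowCongr (Equiv.refl Bool)) g

lemma card_mul_sum_returnWeight :
    (n : ℝ) * ∑ f : Fin n → Bool, returnWeight f =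
      #{f : Fin n → Bool | height f n = 0} := by
  calc (n : ℝ) * ∑ f, returnWeight f = ∑ j ∈ range n, ∑ f, returnWeight (rotate j f) := by
        rw [sum_congr rfl fun j _ => sum_comp_rotate j (returnWeight (n := n)), sum_const,
          card_range, nsmul_eq_mul]
    _ = ∑ f, ∑ j ∈ range n, returnWeight (rotate j f) := sum_comm
    _ = #{f : Fin n → Bool | height f n = 0} := by
        rw [sum_congr rfl fun f _ => sum_returnWeight_rotate f, sum_boole]

lemma height_length_eq (f : Fin n → Bool) : height f n = 2 * #{i | f i = true} - n := by
  have hstep (b : Bool) : step b = 2 * (if b = true then 1 else 0) - 1 := by cases b <;> rfl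
  simp only [height_length, hstep, sum_sub_distrib, ← mul_sum, sum_boole, sum_const, card_univ,
    Fintype.card_fin, nsmul_eq_mul, mul_one]

end

lemma card_filter_card_eq_choose (n k : ℕ) :
    #{f : Fin n → Bool | #{i | f i = true} = k} = n.choose k := by
  rw [show n.choose k = #(powersetCard k (univ : Finset (Fin n))) by simp]
  exact card_nbij' (fun f => ({i | f i = true} : Finset (Fin n))) (fun s i => decide (i ∈ s))
    (fun f hf => by simpa using hf) (fun s hs => by simpa using hs)
    (fun f _ => by funext i; simp) (fun s _ => by ext i; simp)

lemma card_height_length_eq_zero (N : ℕ) [NeZero (2 * N)] :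
    #{f : Fin (2 * N) → Bool | height f (2 * N) = 0} = (2 * N).choose N := by
  rw [← card_filter_card_eq_choose]
  congr 1
  refine filter_congr fun f _ => ?_
  rw [height_length_eq]
  omega

end CyclicWord

open CyclicWord

open scoped Classical in
/-- At `q = 1` the single-parity partition function equals half the central
binomial coefficient: `∑_{w ∈ D_N} N/m(w) = (1/2)·C(2N,N)` for `N ≥ 1`. -/
theorem Z_at_one (N : ℕ) (hN : 1 ≤ N) :
    (∑ f : Fin (2 * N) → Bool,
        if IsDyck (List.ofFn f) then (N : ℝ) / dreturns (List.ofFn f) else 0)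
      = (1 / 2) * ((2 * N).choose N : ℝ) := by
  have : NeZero (2 * N) := ⟨by omega⟩
  have hsum : (∑ f : Fin (2 * N) → Bool,
        if IsDyck (List.ofFn f) then (N : ℝ) / dreturns (List.ofFn f) else 0)
      = N * ∑ f : Fin (2 * N) → Bool, returnWeight f := by
    rw [mul_sum]
    refine sum_congr rfl fun f _ => ?_
    rw [returnWeight, mul_ite, mul_zero, div_eq_mul_inv]
  have key := card_mul_sum_returnWeight (n := 2 * N)
  rw [card_height_length_eq_zero, Nat.cast_mul, Nat.cast_two] at key
  rw [hsum]
  linarith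
end

section
/- In the half-filled locally constrained exclusion process on a ring (jump 010 → 001 with rate q and 001 → 010 with rate 1, allowed only if the site preceding the moving particle is empty), the minimum value of the height function h_k = ∑_{i≤k}(1 − 2η_i) is invariant under every allowed transition, and all sites where the height attains its minimum have the same parity, which is also preserved by the dynamics. -/
open Finset

/-- Height function of a configuration (`true` = particle, step `−1`;
`false` = hole, step `+1`): `h_k = ∑_{i<k} (1 − 2η_i)`. -/
def cheight (η : ℕ → Bool) (k : ℕ) : ℤ :=
  ∑ i ∈ Finset.range k, (if η i then (-1 : ℤ) else 1)

/-- Minimum of the height function over `k ∈ {0,…,L}`. -/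
def chmin (L : ℕ) (η : ℕ → Bool) : ℤ :=
  Finset.min' ((Finset.range (L + 1)).image (cheight η))
    (Finset.Nonempty.image ⟨0, Finset.mem_range.mpr (Nat.succ_pos L)⟩ _)

/-- An allowed transition of the constrained exclusion process at the bond
`(k, k+1)`: the preceding site `k−1` is empty, and the particle/hole pair at
sites `k, k+1` is exchanged (forward move `010 → 001` if the particle sits at
`k`, backward move `001 → 010` if it sits at `k+1`). -/
def MoveAt (L : ℕ) (η η' : ℕ → Bool) (k : ℕ) : Prop :=
  1 ≤ k ∧ k + 2 ≤ L ∧ η (k - 1) = false ∧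
    ((η k = true ∧ η (k + 1) = false) ∨ (η k = false ∧ η (k + 1) = true)) ∧
    η' k = η (k + 1) ∧ η' (k + 1) = η k ∧
    ∀ j, j ≠ k → j ≠ k + 1 → η' j = η j

/-!
A move at the bond `(k, k+1)` changes the height only at `k+1`, turning `h_k ± 1` into
`h_k ∓ 1`. A move is never able to create a new minimum there: the new value is either
`h_k + 1`, or `h_k - 1 = h_{k-1}` because the site `k-1` is empty. As moves are reversible,
the minimum is invariant. Every step of the height is `±1`, so `h_k ≡ k (mod 2)`, and sites
sharing the (common) minimal height share their parity.
-/

lemma cheight_succ (η : ℕ → Bool) (n : ℕ) :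
    cheight η (n + 1) = cheight η n + (if η n then -1 else 1) :=
  sum_range_succ _ n

lemma even_cheight_iff (η : ℕ → Bool) (n : ℕ) : Even (cheight η n) ↔ Even n := by
  induction n with
  | zero => simp [cheight]
  | succ n ih =>
    cases h : η n <;> simp [cheight_succ, h, ← Int.not_even_iff_odd, ih, parity_simps]

lemma even_iff_of_cheight_eq {η η' : ℕ → Bool} {a b : ℕ} (h : cheight η a = cheight η' b) :
    Even a ↔ Even b := by
  rw [← even_cheight_iff η, h, even_cheight_iff]

lemma cheight_congr {η η' : ℕ → Bool} {n : ℕ} (h : ∀ i < n, η' i = η i) :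
    cheight η' n = cheight η n :=
  sum_congr rfl fun i hi => by rw [h i (mem_range.mp hi)]

lemma chmin_le_cheight {L i : ℕ} (η : ℕ → Bool) (hi : i ≤ L) : chmin L η ≤ cheight η i :=
  min'_le _ _ (mem_image_of_mem _ (mem_range.mpr (Nat.lt_succ_of_le hi)))

lemma le_chmin {L : ℕ} {η : ℕ → Bool} {c : ℤ} (h : ∀ i ≤ L, c ≤ cheight η i) :
    c ≤ chmin L η := by
  refine le_min' _ _ _ fun y hy => ?_
  obtain ⟨i, hi, rfl⟩ := mem_image.mp hy
  exact h i (Nat.le_of_lt_succ (mem_range.mp hi))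

namespace MoveAt

variable {L k : ℕ} {η η' : ℕ → Bool}

lemma apply_eq (hm : MoveAt L η η' k) {j : ℕ} (hjk : j ≠ k) (hjk1 : j ≠ k + 1) :
    η' j = η j :=
  hm.2.2.2.2.2.2 j hjk hjk1

lemma symm (hm : MoveAt L η η' k) : MoveAt L η' η k := by
  obtain ⟨hk1, hkL, hprev, hpair, h'k, h'k1, hrest⟩ := hm
  refine ⟨hk1, hkL, ?_, ?_, h'k1.symm, h'k.symm, fun j h1 h2 => (hrest j h1 h2).symm⟩
  · rwa [hrest (k - 1) (by omega) (by omega)]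
  · rw [h'k, h'k1]
    exact hpair.symm.imp And.symm And.symm

lemma cheight_eq_of_le (hm : MoveAt L η η' k) {j : ℕ} (hj : j ≤ k) :
    cheight η' j = cheight η j :=
  cheight_congr fun i hi => hm.apply_eq (by omega) (by omega)

lemma cheight_eq_of_ge (hm : MoveAt L η η' k) {j : ℕ} (hj : k + 2 ≤ j) :
    cheight η' j = cheight η j := by
  induction j, hj using Nat.le_induction with
  | base =>
    obtain ⟨-, -, -, -, h'k, h'k1, -⟩ := id hm
    rw [cheight_succ, cheight_succ, cheight_succ, cheight_succ, hm.cheight_eq_of_le le_rfl,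
      h'k, h'k1]
    ring
  | succ j hj ih => rw [cheight_succ, cheight_succ, ih, hm.apply_eq (by omega) (by omega)]

lemma exists_cheight_le (hm : MoveAt L η η' k) {j : ℕ} (hj : j ≤ L) :
    ∃ i ≤ L, cheight η i ≤ cheight η' j := by
  obtain ⟨hk1, hkL, hprev, hpair, h'k, -, -⟩ := id hm
  rcases lt_trichotomy j (k + 1) with hlt | rfl | hgt
  · exact ⟨j, hj, (hm.cheight_eq_of_le (by omega)).ge⟩
  · have hk : cheight η' (k + 1) = cheight η k + if η' k then -1 else 1 := by
      rw [cheight_succ, hm.cheight_eq_of_le le_rfl]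
    rcases hpair with ⟨-, hB⟩ | ⟨-, hB⟩
    · refine ⟨k, by omega, ?_⟩
      simp [hk, h'k, hB]
    · -- the empty site `k - 1` puts `h_{k-1}` one below `h_k`
      obtain ⟨m, rfl⟩ : ∃ m, k = m + 1 := ⟨k - 1, by omega⟩
      rw [Nat.add_sub_cancel] at hprev
      refine ⟨m, by omega, ?_⟩
      simp [hk, h'k, hB, cheight_succ η m, hprev]
  · exact ⟨j, hj, (hm.cheight_eq_of_ge hgt).ge⟩

lemma chmin_le (hm : MoveAt L η η' k) : chmin L η ≤ chmin L η' := by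
  refine le_chmin fun j hj => ?_
  obtain ⟨i, hi, hle⟩ := hm.exists_cheight_le hj
  exact (chmin_le_cheight η hi).trans hle

end MoveAt

theorem min_height_invariant_general (N : ℕ) (η η' : ℕ → Bool) (k : ℕ)
    (hmove : MoveAt (2 * N) η η' k) :
    chmin (2 * N) η' = chmin (2 * N) η ∧
      (∀ a ∈ Finset.range (2 * N + 1), ∀ b ∈ Finset.range (2 * N + 1),
        cheight η a = chmin (2 * N) η → cheight η b = chmin (2 * N) η →
          (Even a ↔ Even b)) ∧
      (∀ a ∈ Finset.range (2 * N + 1), ∀ b ∈ Finset.range (2 * N + 1),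
        cheight η a = chmin (2 * N) η → cheight η' b = chmin (2 * N) η' →
          (Even a ↔ Even b)) := by
  have hmin : chmin (2 * N) η' = chmin (2 * N) η :=
    le_antisymm hmove.symm.chmin_le hmove.chmin_le
  refine ⟨hmin, fun a _ b _ ha hb => ?_, fun a _ b _ ha hb => ?_⟩
  · exact even_iff_of_cheight_eq (ha.trans hb.symm)
  · exact even_iff_of_cheight_eq (ha.trans (hb.trans hmin).symm)

/-- In the half-filled constrained exclusion process on a ring of `2N` sites,
every allowed transition preserves the minimum of the height function; all
minimum sites share the same parity, and this parity is preserved by the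
dynamics. -/
theorem min_height_invariant (N : ℕ) (η η' : ℕ → Bool) (k : ℕ)
    (hhalf : (∑ i ∈ Finset.range (2 * N), (if η i then 1 else 0)) = N)
    (hmove : MoveAt (2 * N) η η' k) :
    chmin (2 * N) η' = chmin (2 * N) η ∧
      (∀ a ∈ Finset.range (2 * N + 1), ∀ b ∈ Finset.range (2 * N + 1),
        cheight η a = chmin (2 * N) η → cheight η b = chmin (2 * N) η →
          (Even a ↔ Even b)) ∧
      (∀ a ∈ Finset.range (2 * N + 1), ∀ b ∈ Finset.range (2 * N + 1),
        cheight η a = chmin (2 * N) η → cheight η' b = chmin (2 * N) η' →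
          (Even a ↔ Even b)) :=
  min_height_invariant_general N η η' k hmove
end
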